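/- (Generalised Pressure Distribution Principle) Let (M,d,f) be a topological dynamical system, ψ: M → ℝ continuous, and Z ⊆ M an arbitrary Borel set. Suppose there exist ε > 0 and s ≥ 0 such that one can find a sequence of Borel probability measures μ_k on M, a constant K > 0 and an integer N satisfying limsup_{k→∞} μ_k(B_n(x,ε)) ≤ K exp(−ns + Σ_{i=0}^{n−1}ψ(f^i x)) for every Bowen ball B_n(x,ε) with B_n(x,ε) ∩ Z ≠ ∅ and n ≥ N. Suppose furthermore that at least one weak* limit measure ν of the sequence (μ_k) satisfies ν(Z) > 0. Then P(Z, ψ, ε) ≥ s. -/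

import Mathlib

/-!
A weak* limit `ν` of the `μ_k` sees open sets with at least their limsup mass (portmanteau), and
Bowen balls are open, so `ν (B_n(x,ε)) ≤ K exp(-ns + S_nψ(x))` for every ball meeting `Z` of order
`n ≥ N`. Summing over any cover of `Z` by such balls gives `ν Z ≤ K · M(Z,t,ψ,N,ε)` for `t ≤ s`,
so `M(Z,t,ψ,ε) > 0` when `t < s`. Compactness makes the set of `t` with `M(Z,t,ψ,ε) = 0`
nonempty, so `P(Z,ψ,ε)` is a genuine infimum, hence at least `s`.
-/

open MeasureTheory Filter Set Topology
open scoped ENNReal NNReal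

noncomputable section

variable {M : Type*} [MetricSpace M]

/-- The Bowen ball `B_n(x,ε)`. -/
def bowenBall (f : M → M) (n : ℕ) (x : M) (ε : ℝ) : Set M :=
  {y | ∀ i < n, dist (f^[i] x) (f^[i] y) < ε}

/-- The Birkhoff sum `S_n ψ (x)`. -/
def birkhoff (f : M → M) (ψ : M → ℝ) (n : ℕ) (x : M) : ℝ :=
  ∑ i ∈ Finset.range n, ψ (f^[i] x)

/-- `sup_{y ∈ B_n(x,ε)} S_n ψ (y)`. -/
noncomputable def supBirkhoff (f : M → M) (ψ : M → ℝ) (n : ℕ) (x : M) (ε : ℝ) : ℝ :=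
  sSup (birkhoff f ψ n '' bowenBall f n x ε)

/-- The Carathéodory pre-measure `M(Z,t,ψ,n,ε)`: infimum over finite or countable covers of
`Z` by Bowen balls `B_m(x,ε)` with `m ≥ n` of `∑ exp(-tm + sup_{B_m(x,ε)} S_m ψ)`. -/
noncomputable def presPre (f : M → M) (ψ : M → ℝ) (Z : Set M) (t : ℝ) (n : ℕ) (ε : ℝ) :
    ℝ≥0∞ :=
  ⨅ (C : Set (M × ℕ)) (_ : C.Countable) (_ : ∀ p ∈ C, n ≤ p.2)
    (_ : Z ⊆ ⋃ p ∈ C, bowenBall f p.2 p.1 ε),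
    ∑' p : C, ENNReal.ofReal
      (Real.exp (-(t * (p : M × ℕ).2) + supBirkhoff f ψ (p : M × ℕ).2 (p : M × ℕ).1 ε))

/-- `M(Z,t,ψ,ε) = lim_{n → ∞} M(Z,t,ψ,n,ε)` (the quantity is nondecreasing in `n`). -/
noncomputable def presLim (f : M → M) (ψ : M → ℝ) (Z : Set M) (t : ℝ) (ε : ℝ) : ℝ≥0∞ :=
  ⨆ n : ℕ, presPre f ψ Z t n ε

/-- The topological pressure of `Z` at scale `ε`:
`P(Z,ψ,ε) = inf {t | M(Z,t,ψ,ε) = 0}`. -/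
noncomputable def pressureAt (f : M → M) (ψ : M → ℝ) (Z : Set M) (ε : ℝ) : ℝ :=
  sInf {t : ℝ | presLim f ψ Z t ε = 0}

/-- Generic points of the measure `ν`: points whose empirical measures converge to `ν`
in the weak* topology. -/
def ergGenericPoints (f : M → M) [MeasurableSpace M] (ν : Measure M) : Set M :=
  {x | ∀ g : C(M, ℝ), Tendsto (fun n => birkhoff f g n x / n) atTop (𝓝 (∫ y, g y ∂ν))}

/-- The entropy `H((1/n)·(P ∨ f⁻¹P ∨ ⋯ ∨ f^{-(n-1)}P))` of the `n`-th dynamical refinement of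
the finite partition `P`. -/
noncomputable def partH [MeasurableSpace M] (μ : Measure M) (f : M → M) {k : ℕ}
    (P : Fin k → Set M) (n : ℕ) : ℝ :=
  ∑ a : Fin n → Fin k, Real.negMulLog ((μ (⋂ i : Fin n, f^[(i : ℕ)] ⁻¹' P (a i))).toReal)

/-- The Kolmogorov–Sinai (measure-theoretic) entropy `h_μ(f)`: the supremum over finite
measurable partitions `P` of `lim_n (1/n) H(⋁_{i<n} f^{-i} P)`. -/
noncomputable def ksEntropy [MeasurableSpace M] (f : M → M) (μ : Measure M) : ℝ :=
  sSup {h | ∃ (k : ℕ) (P : Fin k → Set M),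
    (∀ i, MeasurableSet (P i)) ∧ Pairwise (Function.onFun Disjoint P) ∧ (⋃ i, P i) = Set.univ ∧
    h = Filter.atTop.liminf (fun n => partH μ f P n / n)}

/-- Katok's quantity `N^μ(ψ,δ,ε,n)`: the infimum of `∑_{x ∈ S} exp (S_n ψ (x))` over finite
sets `S` which `(n,ε)`-span some set `Z` with `μ(Z) > 1 - δ`. -/
noncomputable def katokN [MeasurableSpace M] (f : M → M) (μ : Measure M) (ψ : M → ℝ)
    (δ ε : ℝ) (n : ℕ) : ℝ :=
  sInf {r | ∃ (S : Finset M) (Z : Set M), ENNReal.ofReal (1 - δ) < μ Z ∧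
    (Z ⊆ ⋃ x ∈ S, bowenBall f n x ε) ∧ r = ∑ x ∈ S, Real.exp (birkhoff f ψ n x)}

/-- Katok's measure-theoretic pressure at scale `ε`:
`P_μ^{Kat}(f,ψ,ε) = liminf_{n→∞} (1/n) log N^μ(ψ,δ,ε,n)`. -/
noncomputable def katokP [MeasurableSpace M] (f : M → M) (μ : Measure M) (ψ : M → ℝ)
    (δ ε : ℝ) : ℝ :=
  Filter.atTop.liminf (fun n => Real.log (katokN f μ ψ δ ε n) / n)

end

open BoundedContinuousFunction in
lemma MeasureTheory.measure_le_limsup_of_subseq_tendsto_integral {Ω : Type*} [MetricSpace Ω]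
    [MeasurableSpace Ω] [BorelSpace Ω] {μ : ℕ → Measure Ω} [∀ k, IsProbabilityMeasure (μ k)]
    {ν : Measure Ω} [IsProbabilityMeasure ν] {φ : ℕ → ℕ} (hφ : StrictMono φ)
    (hconv : ∀ g : Ω →ᵇ ℝ, Tendsto (fun k => ∫ x, g x ∂μ (φ k)) atTop (𝓝 (∫ x, g x ∂ν)))
    {U : Set Ω} (hU : IsOpen U) :
    ν U ≤ limsup (fun k => μ k U) atTop := by
  let P : ℕ → ProbabilityMeasure Ω := fun k => ⟨μ (φ k), inferInstance⟩
  let P₀ : ProbabilityMeasure Ω := ⟨ν, inferInstance⟩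
  have hweak : Tendsto P atTop (𝓝 P₀) :=
    ProbabilityMeasure.tendsto_iff_forall_integral_tendsto.mpr hconv
  calc ν U ≤ liminf (fun k => μ (φ k) U) atTop :=
        ProbabilityMeasure.le_liminf_measure_open_of_tendsto hweak hU
    _ ≤ limsup (fun k => μ (φ k) U) atTop := liminf_le_limsup
    _ ≤ limsup (fun k => μ k U) atTop :=
        hφ.tendsto_atTop.limsup_comp_le_limsup (u := fun k => μ k U)

section

variable {M : Type*} {f : M → M} {ψ : M → ℝ}

lemma birkhoff_le_of_le {B : ℝ} (hB : ∀ x, ψ x ≤ B) (n : ℕ) (x : M) :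
    birkhoff f ψ n x ≤ n * B := by
  simpa [birkhoff] using
    Finset.sum_le_card_nsmul (Finset.range n) (fun i => ψ (f^[i] x)) B fun i _ => hB _

variable [MetricSpace M]

lemma isOpen_bowenBall (hf : Continuous f) (n : ℕ) (x : M) (ε : ℝ) :
    IsOpen (bowenBall f n x ε) := by
  have : bowenBall f n x ε = ⋂ i ∈ Finset.range n, f^[i] ⁻¹' Metric.ball (f^[i] x) ε := by
    ext y
    simp [bowenBall, dist_comm]
  rw [this]
  exact isOpen_biInter_finset fun i _ => Metric.isOpen_ball.preimage (hf.iterate i)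

lemma supBirkhoff_le_of_le {B : ℝ} (hB : ∀ x, ψ x ≤ B) (hB₀ : 0 ≤ B) (n : ℕ) (x : M) (ε : ℝ) :
    supBirkhoff f ψ n x ε ≤ n * B :=
  Real.sSup_le (by rintro _ ⟨y, -, rfl⟩; exact birkhoff_le_of_le hB n y) (by positivity)

lemma birkhoff_le_supBirkhoff (hψ : BddAbove (range ψ)) (n : ℕ) (x : M) {ε : ℝ} (hε : 0 < ε) :
    birkhoff f ψ n x ≤ supBirkhoff f ψ n x ε := by
  obtain ⟨B, hB⟩ := hψ
  refine le_csSup ⟨n * B, ?_⟩ ⟨x, fun i _ => by simpa using hε, rfl⟩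
  rintro _ ⟨y, -, rfl⟩
  exact birkhoff_le_of_le (fun z => hB ⟨z, rfl⟩) n y

/-- Points with the same itinerary through an `ε/2`-net stay `ε`-close for `m` steps. -/
lemma exists_card_le_pow_bowenBall_cover [CompactSpace M] (f : M → M) {ε : ℝ} (hε : 0 < ε) :
    ∃ c : ℕ, ∀ m, ∃ S : Finset M, S.card ≤ c ^ m ∧ ⋃ x ∈ S, bowenBall f m x ε = univ := by
  classical
  obtain ⟨D, -, hDfin, hD⟩ := finite_cover_balls_of_compact (isCompact_univ (X := M)) (half_pos hε)
  lift D to Finset M using hDfin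
  have hnear : ∀ y : M, ∃ z ∈ D, dist y z < ε / 2 := fun y => by simpa using hD (mem_univ y)
  choose near hnearD hnear_dist using hnear
  refine ⟨D.card, fun m => ?_⟩
  rcases isEmpty_or_nonempty M with hM | hM
  · exact ⟨∅, by simp, eq_univ_of_forall isEmptyElim⟩
  let itinerary : M → (Fin m → D) := fun y i => ⟨near (f^[i] y), hnearD _⟩
  refine ⟨Finset.univ.image (Function.invFun itinerary), ?_, ?_⟩
  · calc _ ≤ Fintype.card (Fin m → D) := Finset.card_image_le
      _ = D.card ^ m := by simp
  · refine eq_univ_of_forall fun y => mem_biUnion (Finset.mem_image_of_mem _ (Finset.mem_univ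
      (itinerary y))) fun i hi => ?_
    have hsame : near (f^[i] (Function.invFun itinerary (itinerary y))) = near (f^[i] y) :=
      congrArg Subtype.val (congrFun (Function.invFun_eq (f := itinerary) ⟨y, rfl⟩) ⟨i, hi⟩)
    calc _ ≤ _ := dist_triangle _ (near (f^[i] y)) _
      _ < ε / 2 + ε / 2 := add_lt_add (hsame ▸ hnear_dist _) (dist_comm (f^[i] y) _ ▸ hnear_dist _)
      _ = ε := add_halves ε

lemma presPre_le_card_mul {Z : Set M} {S : Finset M} {t ε b : ℝ} {n m : ℕ} (hnm : n ≤ m)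
    (hZ : Z ⊆ ⋃ x ∈ S, bowenBall f m x ε) (hb : ∀ x, supBirkhoff f ψ m x ε ≤ b) :
    presPre f ψ Z t n ε ≤ S.card * ENNReal.ofReal (Real.exp (-(t * m) + b)) := by
  classical
  set C : Finset (M × ℕ) := S.image (·, m)
  have hC : ∀ p ∈ C, p.2 = m := by simp [C]
  have hCcover : Z ⊆ ⋃ p ∈ (C : Set (M × ℕ)), bowenBall f p.2 p.1 ε := by
    refine hZ.trans (iUnion₂_subset fun x hx y hy => ?_)
    exact mem_biUnion (Finset.mem_coe.mpr (Finset.mem_image_of_mem (·, m) hx)) hy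
  calc presPre f ψ Z t n ε
      ≤ ∑' p : (C : Set (M × ℕ)), ENNReal.ofReal
          (Real.exp (-(t * (p : M × ℕ).2) + supBirkhoff f ψ (p : M × ℕ).2 (p : M × ℕ).1 ε)) :=
        iInf_le_of_le _ <| iInf_le_of_le C.countable_toSet <|
          iInf_le_of_le (fun p hp => hC p hp ▸ hnm) <| iInf_le _ hCcover
    _ = ∑ p ∈ C, ENNReal.ofReal (Real.exp (-(t * p.2) + supBirkhoff f ψ p.2 p.1 ε)) :=
        Finset.tsum_subtype' C fun p : M × ℕ =>
          ENNReal.ofReal (Real.exp (-(t * p.2) + supBirkhoff f ψ p.2 p.1 ε))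
    _ ≤ ∑ _p ∈ C, ENNReal.ofReal (Real.exp (-(t * m) + b)) := by
        refine Finset.sum_le_sum fun p hp => ?_
        rw [hC p hp]
        gcongr
        exact hb _
    _ ≤ S.card * ENNReal.ofReal (Real.exp (-(t * m) + b)) := by
        rw [Finset.sum_const, nsmul_eq_mul]
        gcongr
        exact Finset.card_image_le

/-- The exponent `t = sup ψ + log (c + 1) + 1` beats the `c ^ m` balls of order `m` needed to
cover. Without such a `t`, `pressureAt` would be the junk value `sInf ∅ = 0`. -/
lemma exists_presLim_eq_zero [CompactSpace M] (hψ : BddAbove (range ψ)) (Z : Set M) {ε : ℝ}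
    (hε : 0 < ε) : ∃ t, presLim f ψ Z t ε = 0 := by
  obtain ⟨B, hB⟩ := hψ
  have hψB : ∀ x, ψ x ≤ max B 0 := fun x => (hB ⟨x, rfl⟩).trans (le_max_left _ _)
  obtain ⟨c, hc⟩ := exists_card_le_pow_bowenBall_cover f hε
  set t := max B 0 + Real.log (c + 1) + 1 with ht
  have hc_pow (m : ℕ) : (((c + 1) ^ m : ℕ) : ℝ) = Real.exp (m * Real.log (c + 1)) := by
    rw [Real.exp_nat_mul, Real.exp_log (by positivity)]
    push_cast
    rfl
  have hsmall (n m : ℕ) (hnm : n ≤ m) :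
      presPre f ψ Z t n ε ≤ ENNReal.ofReal (Real.exp (-m)) := by
    obtain ⟨S, hScard, hS⟩ := hc m
    calc presPre f ψ Z t n ε
        ≤ S.card * ENNReal.ofReal (Real.exp (-(t * m) + m * max B 0)) :=
          presPre_le_card_mul hnm (hS ▸ subset_univ Z)
            (fun x => supBirkhoff_le_of_le hψB (le_max_right _ _) m x ε)
      _ ≤ ((c + 1) ^ m : ℕ) * ENNReal.ofReal (Real.exp (-(t * m) + m * max B 0)) := by
          gcongr
          exact hScard.trans (Nat.pow_le_pow_left (Nat.le_succ c) m)
      _ = ENNReal.ofReal (Real.exp (-m)) := by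
          rw [← ENNReal.ofReal_natCast, ← ENNReal.ofReal_mul (Nat.cast_nonneg _), hc_pow,
            ← Real.exp_add, ht]
          ring_nf
  refine ⟨t, ENNReal.iSup_eq_zero.mpr fun n => le_antisymm ?_ zero_le⟩
  have hexp : Tendsto (fun m : ℕ => ENNReal.ofReal (Real.exp (-m))) atTop (𝓝 0) := by
    simpa using ENNReal.tendsto_ofReal
      (Real.tendsto_exp_atBot.comp (tendsto_neg_atTop_atBot.comp tendsto_natCast_atTop_atTop))
  exact ge_of_tendsto hexp ((eventually_ge_atTop n).mono (hsmall n))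

lemma measure_div_le_presPre [MeasurableSpace M] {ν : Measure M} {Z : Set M} {t ε : ℝ} {N : ℕ}
    {c : ℝ≥0∞} (hball : ∀ x n, N ≤ n → (bowenBall f n x ε ∩ Z).Nonempty →
      ν (bowenBall f n x ε) ≤ c * ENNReal.ofReal (Real.exp (-(t * n) + supBirkhoff f ψ n x ε))) :
    ν Z / c ≤ presPre f ψ Z t N ε := by
  simp only [presPre, le_iInf_iff]
  intro C hC hCN hZC
  refine ENNReal.div_le_of_le_mul ?_
  have hZC' : Z ⊆ ⋃ p ∈ C, bowenBall f p.2 p.1 ε ∩ Z := fun z hz => by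
    obtain ⟨p, hp, hzp⟩ := mem_iUnion₂.mp (hZC hz)
    exact mem_biUnion hp ⟨hzp, hz⟩
  calc ν Z ≤ ∑' p : C, ν (bowenBall f (p : M × ℕ).2 (p : M × ℕ).1 ε ∩ Z) :=
        (measure_mono hZC').trans (measure_biUnion_le ν hC _)
    _ ≤ ∑' p : C, c * ENNReal.ofReal
          (Real.exp (-(t * (p : M × ℕ).2) + supBirkhoff f ψ (p : M × ℕ).2 (p : M × ℕ).1 ε)) := by
        refine ENNReal.tsum_le_tsum fun p => ?_
        rcases (bowenBall f (p : M × ℕ).2 (p : M × ℕ).1 ε ∩ Z).eq_empty_or_nonempty with h | h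
        · simp [h]
        · exact (measure_mono inter_subset_left).trans (hball _ _ (hCN _ p.2) h)
    _ = _ := by rw [ENNReal.tsum_mul_left, mul_comm]

lemma ofReal_mul_exp_birkhoff_le (hψ : BddAbove (range ψ)) {ε t s : ℝ} (hε : 0 < ε)
    (hts : t ≤ s) (K : ℝ) (n : ℕ) (x : M) :
    ENNReal.ofReal (K * Real.exp (-(n : ℝ) * s + birkhoff f ψ n x)) ≤
      ENNReal.ofReal K * ENNReal.ofReal (Real.exp (-(t * n) + supBirkhoff f ψ n x ε)) := by
  rw [ENNReal.ofReal_mul' (Real.exp_nonneg _)]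
  gcongr ENNReal.ofReal K * ENNReal.ofReal (Real.exp ?_)
  have : t * n ≤ s * n := by gcongr
  linarith [birkhoff_le_supBirkhoff (f := f) hψ n x hε]

end

theorem generalized_pressure_distribution_principle_general {M : Type*} [MetricSpace M]
    [CompactSpace M] [MeasurableSpace M] [BorelSpace M]
    (f : M → M) (hf : Continuous f) (ψ : M → ℝ) (hψ : Continuous ψ)
    (Z : Set M)
    (ε s : ℝ) (hε : 0 < ε)
    (μ : ℕ → Measure M) (hμ : ∀ k, IsProbabilityMeasure (μ k))
    (K : ℝ) (N : ℕ)
    (hbound : ∀ (x : M) (n : ℕ), N ≤ n → (bowenBall f n x ε ∩ Z).Nonempty →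
      Filter.atTop.limsup (fun k => μ k (bowenBall f n x ε)) ≤
        ENNReal.ofReal (K * Real.exp (-(n : ℝ) * s + birkhoff f ψ n x)))
    (ν : Measure M) (hν : IsProbabilityMeasure ν)
    (hlim : ∃ φ : ℕ → ℕ, StrictMono φ ∧ ∀ g : C(M, ℝ),
      Tendsto (fun k => ∫ x, g x ∂(μ (φ k))) atTop (𝓝 (∫ x, g x ∂ν)))
    (hνZ : 0 < ν Z) :
    s ≤ pressureAt f ψ Z ε := by
  obtain ⟨φ, hφ, hconv⟩ := hlim
  have hψ_bdd : BddAbove (range ψ) := (isCompact_range hψ).bddAbove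
  refine le_csInf (exists_presLim_eq_zero hψ_bdd Z hε) fun t (ht : presLim f ψ Z t ε = 0) => ?_
  by_contra! hts
  have hball (x : M) (n : ℕ) (hn : N ≤ n) (hxZ : (bowenBall f n x ε ∩ Z).Nonempty) :
      ν (bowenBall f n x ε) ≤
        ENNReal.ofReal K * ENNReal.ofReal (Real.exp (-(t * n) + supBirkhoff f ψ n x ε)) :=
    (measure_le_limsup_of_subseq_tendsto_integral hφ (fun g => hconv g.toContinuousMap)
      (isOpen_bowenBall hf n x ε)).trans <|
        (hbound x n hn hxZ).trans (ofReal_mul_exp_birkhoff_le hψ_bdd hε hts.le K n x)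
  have hpresPre : presPre f ψ Z t N ε = 0 :=
    le_antisymm ((le_iSup (fun n => presPre f ψ Z t n ε) N).trans ht.le) zero_le
  have hνZ_div : ν Z / ENNReal.ofReal K = 0 :=
    le_antisymm (hpresPre ▸ measure_div_le_presPre hball) zero_le
  simp [hνZ.ne'] at hνZ_div

/-- Generalised Pressure Distribution Principle.  Let `(M,d,f)` be a
topological dynamical system, `ψ` continuous and `Z ⊆ M` Borel.  Suppose there are `ε > 0`,
`s ≥ 0`, a sequence of Borel probability measures `μ_k`, a constant `K > 0` and an integer
`N` with `limsup_k μ_k(B_n(x,ε)) ≤ K exp(−ns + S_nψ(x))` for every Bowen ball `B_n(x,ε)`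
meeting `Z` with `n ≥ N`, and suppose some weak* limit measure `ν` of `(μ_k)` has
`ν(Z) > 0`.  Then `P(Z,ψ,ε) ≥ s`. -/
theorem generalized_pressure_distribution_principle {M : Type*} [MetricSpace M]
    [CompactSpace M] [MeasurableSpace M] [BorelSpace M]
    (f : M → M) (hf : Continuous f) (ψ : M → ℝ) (hψ : Continuous ψ)
    (Z : Set M) (hZ : MeasurableSet Z)
    (ε s : ℝ) (hε : 0 < ε) (hs : 0 ≤ s)
    (μ : ℕ → Measure M) (hμ : ∀ k, IsProbabilityMeasure (μ k))
    (K : ℝ) (hK : 0 < K) (N : ℕ)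
    (hbound : ∀ (x : M) (n : ℕ), N ≤ n → (bowenBall f n x ε ∩ Z).Nonempty →
      Filter.atTop.limsup (fun k => μ k (bowenBall f n x ε)) ≤
        ENNReal.ofReal (K * Real.exp (-(n : ℝ) * s + birkhoff f ψ n x)))
    (ν : Measure M) (hν : IsProbabilityMeasure ν)
    (hlim : ∃ φ : ℕ → ℕ, StrictMono φ ∧ ∀ g : C(M, ℝ),
      Tendsto (fun k => ∫ x, g x ∂(μ (φ k))) atTop (𝓝 (∫ x, g x ∂ν)))
    (hνZ : 0 < ν Z) :
    s ≤ pressureAt f ψ Z ε :=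
  generalized_pressure_distribution_principle_general f hf ψ hψ Z ε s hε μ hμ K N hbound ν hν hlim
    hνZ
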